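/- Let (b, c) be a pair where b : ℕ → ℕ is non-decreasing with b(0) > 0 and c_i : {0,…,b(i)−1} → {0,…,b(i+1)−1} are strictly increasing functions, and write c_{ij} = c_{j-1} ∘ ⋯ ∘ c_i for i < j. Suppose that for every d : ℕ → ℕ with d(i) < b(i) for all i, and every infinite Y ⊆ ℕ, there exist i < j in Y with c_{ij}(d(i)) ≤ d(j). Then the direct limit X of the system (c_{ij}) is a well order: there is no sequence (x_n) in X with x_{n+1} < x_n for all n. -/
import Mathlib


/-- `iterC c i k n` is the composite `c_{i+k-1} ∘ ⋯ ∘ c_i` applied to `n`,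
i.e. the transition map `c_{i,i+k}` of the directed system. -/
def iterC (c : ℕ → ℕ → ℕ) (i : ℕ) : ℕ → ℕ → ℕ
  | 0, n => n
  | k + 1, n => c (i + k) (iterC c i k n)

section aux

variable {b : ℕ → ℕ} {c : ℕ → ℕ → ℕ}

lemma iterC_lt_b (hcb : ∀ i n, n < b i → c i n < b (i + 1)) :
    ∀ (k i n : ℕ), n < b i → iterC c i k n < b (i + k) := by
  intro k
  induction k with
  | zero => intro i n h; simpa [iterC] using h
  | succ k ih =>
    intro i n h
    exact hcb (i + k) _ (ih i n h)

lemma iterC_strictMono (hcb : ∀ i n, n < b i → c i n < b (i + 1))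
    (hcmono : ∀ i m n, m < n → n < b i → c i m < c i n) :
    ∀ (k i m n : ℕ), m < n → n < b i → iterC c i k m < iterC c i k n := by
  intro k
  induction k with
  | zero => intro i m n h _; simpa [iterC] using h
  | succ k ih =>
    intro i m n h hn
    exact hcmono (i + k) _ _ (ih i m n h hn) (iterC_lt_b hcb k i n hn)

lemma iterC_add (c : ℕ → ℕ → ℕ) (i k : ℕ) :
    ∀ l n, iterC c i (k + l) n = iterC c (i + k) l (iterC c i k n) := by
  intro l
  induction l with
  | zero => intro n; simp [iterC]
  | succ l ih =>
    intro n
    show c (i + (k + l)) (iterC c i (k + l) n) =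
      c (i + k + l) (iterC c (i + k) l (iterC c i k n))
    rw [ih, Nat.add_assoc]

/-- push a value at level `L` up to level `L'`. -/
lemma iterC_push (c : ℕ → ℕ → ℕ) {i L L' : ℕ} (hiL : i ≤ L) (hLL' : L ≤ L') (n : ℕ) :
    iterC c i (L' - i) n = iterC c L (L' - L) (iterC c i (L - i) n) := by
  have h1 : L' - i = (L - i) + (L' - L) := by omega
  have h2 : i + (L - i) = L := by omega
  rw [h1, iterC_add, h2]

end aux

/-- If `(b,c)` is a Goodstein system, then the direct limit of the system of orders
`{0,…,b i − 1}` along the embeddings `c_{ij}` is a well order: there is no sequence of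
representatives `(x n) = (iₙ, mₙ)` (with `mₙ < b iₙ`) that is strictly descending in the
limit order, where `(i,m) < (j,m')` holds iff `c_{ik} m < c_{jk} m'` for some `k ≥ i, j`. -/
theorem goodsteinSystem_limit_wellOrdered (b : ℕ → ℕ) (c : ℕ → ℕ → ℕ)
    (hb : Monotone b) (hb0 : 0 < b 0)
    (hcb : ∀ i n, n < b i → c i n < b (i + 1))
    (hcmono : ∀ i m n, m < n → n < b i → c i m < c i n)
    (hgood : ∀ d : ℕ → ℕ, (∀ i, d i < b i) → ∀ Y : Set ℕ, Y.Infinite →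
      ∃ i ∈ Y, ∃ j ∈ Y, i < j ∧ iterC c i (j - i) (d i) ≤ d j) :
    ¬ ∃ x : ℕ → ℕ × ℕ, (∀ n, (x n).2 < b (x n).1) ∧
        ∀ n, ∃ k, (x n).1 ≤ k ∧ (x (n + 1)).1 ≤ k ∧
          iterC c ((x (n + 1)).1) (k - (x (n + 1)).1) ((x (n + 1)).2) <
            iterC c ((x n).1) (k - (x n).1) ((x n).2) := by
  classical
  rintro ⟨x, hx, hdesc⟩
  choose k hk1 hk2 hk3 using hdesc
  -- value of x n at level L
  set v : ℕ → ℕ → ℕ := fun n L => iterC c ((x n).1) (L - (x n).1) ((x n).2) with hv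
  have hvb : ∀ n L, (x n).1 ≤ L → v n L < b L := by
    intro n L h
    have := iterC_lt_b hcb (L - (x n).1) ((x n).1) ((x n).2) (hx n)
    rwa [Nat.add_sub_cancel' h] at this
  -- strictly increasing levels K
  set K : ℕ → ℕ := fun n => Nat.rec (k 0) (fun n Kn => max (k (n + 1)) (Kn + 1)) n with hK
  have hKrec : ∀ n, K (n + 1) = max (k (n + 1)) (K n + 1) := fun _ => rfl
  have hKk : ∀ n, k n ≤ K n := by
    intro n; cases n with
    | zero => exact le_rfl
    | succ n => rw [hKrec]; omega
  have hKsucc : ∀ n, K n < K (n + 1) := by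
    intro n; rw [hKrec]; omega
  have hKmono : StrictMono K := strictMono_nat_of_lt_succ hKsucc
  -- one-step descent at any level L ≥ K m
  have step : ∀ m L, K m ≤ L → v (m + 1) L < v m L := by
    intro m L hL
    have hkL : k m ≤ L := (hKk m).trans hL
    have h1 : (x m).1 ≤ k m := hk1 m
    have h2 : (x (m + 1)).1 ≤ k m := hk2 m
    have e1 : v m L = iterC c (k m) (L - k m) (v m (k m)) := iterC_push c h1 hkL _
    have e2 : v (m + 1) L = iterC c (k m) (L - k m) (v (m + 1) (k m)) :=
      iterC_push c h2 hkL _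
    rw [e1, e2]
    exact iterC_strictMono hcb hcmono _ _ _ _ (hk3 m) (hvb m (k m) h1)
  -- chained descent
  have chain : ∀ (a e L : ℕ), a < e → (∀ m, a ≤ m → m < e → K m ≤ L) → v e L < v a L := by
    intro a e
    induction e with
    | zero => intro L h _; omega
    | succ e ih =>
      intro L hae hm
      rcases Nat.lt_or_ge a e with h | h
      · exact (step e L (hm e (by omega) (by omega))).trans
          (ih L h (fun m h1 h2 => hm m h1 (by omega)))
      · have : a = e := by omega
        subst this
        exact step a L (hm a le_rfl (by omega))
  -- the bad diagonal
  set d : ℕ → ℕ := fun i =>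
    if h : ∃ n, K n = i then v (Nat.find h + 1) i else 0 with hd
  have hdb : ∀ i, d i < b i := by
    intro i
    simp only [hd]
    split
    next h =>
      have hKi : K (Nat.find h) = i := Nat.find_spec h
      have : (x (Nat.find h + 1)).1 ≤ i := by
        calc (x (Nat.find h + 1)).1 ≤ k (Nat.find h) := hk2 _
        _ ≤ K (Nat.find h) := hKk _
        _ = i := hKi
      exact hvb _ _ this
    next => exact lt_of_lt_of_le hb0 (hb (Nat.zero_le i))
  have hY : (Set.range K).Infinite := Set.infinite_range_of_injective hKmono.injective
  obtain ⟨i, ⟨n, rfl⟩, j, ⟨n', rfl⟩, hij, hle⟩ := hgood d hdb _ hY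
  have hnn' : n < n' := hKmono.lt_iff_lt.mp hij
  have hfind : ∀ n, (Nat.find (⟨n, rfl⟩ : ∃ m, K m = K n)) = n := by
    intro n
    have h := Nat.find_spec (⟨n, rfl⟩ : ∃ m, K m = K n)
    exact hKmono.injective h
  have hdK : ∀ n, d (K n) = v (n + 1) (K n) := by
    intro n
    simp only [hd]
    have h : ∃ m, K m = K n := ⟨n, rfl⟩
    rw [dif_pos h, hfind n]
  rw [hdK, hdK] at hle
  -- push d (K n) = v (n+1) (K n) up to level K n'
  have hxn1 : (x (n + 1)).1 ≤ K n := (hk2 n).trans (hKk n)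
  have hKle : K n ≤ K n' := hKmono.le_iff_le.mpr hnn'.le
  have epush : iterC c (K n) (K n' - K n) (v (n + 1) (K n)) = v (n + 1) (K n') :=
    (iterC_push c hxn1 hKle _).symm
  rw [epush] at hle
  have hlt : v (n' + 1) (K n') < v (n + 1) (K n') := by
    apply chain (n + 1) (n' + 1) (K n') (by omega)
    intro m h1 h2
    exact hKmono.le_iff_le.mpr (by omega)
  omega
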